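/- arXiv:0711.3785 — 2 statements merged into one kernel-verified Lean document; each statement's English description precedes it below -/
import Mathlib

section
/- Every nontrivial element of the positive 3-strand braid monoid B_3^+ is represented by exactly one ϕ-normal word on the alphabet {σ1, σ2}. -/
namespace Braid3

/-! ### The positive 3-strand braid monoid
presented by σ1, σ2 (letters `0`, `1` of `Fin 2`) with the relation σ1σ2σ1 = σ2σ1σ2. -/

def braidRel : FreeMonoid (Fin 2) → FreeMonoid (Fin 2) → Prop := fun u v =>
  u = FreeMonoid.of 0 * FreeMonoid.of 1 * FreeMonoid.of 0 ∧
  v = FreeMonoid.of 1 * FreeMonoid.of 0 * FreeMonoid.of 1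

def braidCon : Con (FreeMonoid (Fin 2)) := conGen braidRel

/-- The positive 3-strand braid monoid `B₃⁺`. -/
abbrev B3P := braidCon.Quotient

/-- The element of `B₃⁺` represented by a word on the alphabet {σ1, σ2}. -/
def mkw (w : List (Fin 2)) : B3P := braidCon.mk' (FreeMonoid.ofList w)

/-- σ1 as an element of B₃⁺. -/
def s1 : B3P := mkw [0]
/-- σ2 as an element of B₃⁺. -/
def s2 : B3P := mkw [1]
/-- Garside's fundamental braid Δ₃ = σ1σ2σ1. -/
def Δ : B3P := mkw [0, 1, 0]

/-! ### The 3-strand braid group B₃, with the same presentation. -/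

def grpRels : Set (FreeGroup (Fin 2)) :=
  { FreeGroup.of 0 * FreeGroup.of 1 * FreeGroup.of 0 *
    (FreeGroup.of 1 * FreeGroup.of 0 * FreeGroup.of 1)⁻¹ }

abbrev B3 := PresentedGroup grpRels

def g (i : Fin 2) : B3 := PresentedGroup.of i

theorem grp_braid_rel : g 0 * g 1 * g 0 = g 1 * g 0 * g 1 := by
  show (QuotientGroup.mk (FreeGroup.of 0 * FreeGroup.of 1 * FreeGroup.of 0) : B3)
      = QuotientGroup.mk (FreeGroup.of 1 * FreeGroup.of 0 * FreeGroup.of 1)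
  rw [QuotientGroup.eq]
  have h : (FreeGroup.of 0 * FreeGroup.of 1 * FreeGroup.of 0 *
      (FreeGroup.of 1 * FreeGroup.of 0 * FreeGroup.of 1)⁻¹ : FreeGroup (Fin 2)) ∈
      Subgroup.normalClosure grpRels :=
    Subgroup.subset_normalClosure rfl
  have h2 := (Subgroup.normalClosure_normal (s := grpRels)).conj_mem _ h
      (FreeGroup.of 0 * FreeGroup.of 1 * FreeGroup.of 0)⁻¹
  simp only [inv_inv] at h2
  have h3 : ((FreeGroup.of 0 * FreeGroup.of 1 * FreeGroup.of 0 : FreeGroup (Fin 2)))⁻¹ *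
      (FreeGroup.of 0 * FreeGroup.of 1 * FreeGroup.of 0 *
        (FreeGroup.of 1 * FreeGroup.of 0 * FreeGroup.of 1)⁻¹) *
      (FreeGroup.of 0 * FreeGroup.of 1 * FreeGroup.of 0) =
      ((FreeGroup.of 0 * FreeGroup.of 1 * FreeGroup.of 0 : FreeGroup (Fin 2))⁻¹ *
        (FreeGroup.of 1 * FreeGroup.of 0 * FreeGroup.of 1))⁻¹ := by
    group
  rw [h3] at h2
  exact (Subgroup.inv_mem_iff _).mp h2

/-- The canonical embedding of B₃⁺ into B₃. -/
def ι : B3P →* B3 :=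
  Con.lift _ (FreeMonoid.lift fun i => g i) (by
    apply Con.conGen_le.mpr
    rintro u v ⟨hu, hv⟩
    subst hu; subst hv
    rw [Con.ker_rel]
    simp only [map_mul, FreeMonoid.lift_eval_of]
    exact grp_braid_rel)

/-! ### The braid order -/

/-- Evaluation in B₃ of a word on the letters σ1^{±1}, σ2^{±1}
(a letter `(i, true)` is σ_{i+1}, a letter `(i, false)` is σ_{i+1}⁻¹). -/
def evalSW (w : List (Fin 2 × Bool)) : B3 :=
  (w.map fun l => if l.2 then g l.1 else (g l.1)⁻¹).prod

/-- A signed word is σ-positive if the generator of highest occurring index occurs,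
and occurs only positively. -/
def SigmaPos (w : List (Fin 2 × Bool)) : Prop :=
  ∃ i : Fin 2, (i, true) ∈ w ∧ (i, false) ∉ w ∧ ∀ l ∈ w, l.1 ≤ i

/-- The braid order on the group B₃. -/
def gLt (a b : B3) : Prop := ∃ w, SigmaPos w ∧ evalSW w = a⁻¹ * b

/-- The braid order on B₃⁺. -/
def blt (a b : B3P) : Prop := gLt (ι a) (ι b)

def ble (a b : B3P) : Prop := blt a b ∨ a = b

/-! ### ϕ-normal words and exponent sequences -/

/-- The minimal legal sizes e_k^min. -/
def emin : ℕ → ℕ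
  | 1 => 0
  | 2 => 1
  | _ => 2

/-- The letter of the k-th block (1-based, from the right): σ1 for odd k, σ2 for even k. -/
def letterOf (k : ℕ) : Fin 2 := if k % 2 = 1 then 0 else 1

/-- The word σ_{[p]}^{e_p} ⋯ σ2^{e_2} σ1^{e_1} associated with the exponent
sequence `E = [e_p, …, e_1]`. -/
def wordOfExpSeq : List ℕ → List (Fin 2)
  | [] => []
  | e :: rest => List.replicate e (letterOf (rest.length + 1)) ++ wordOfExpSeq rest

/-- `expAt E k` is e_k, the k-th entry of the exponent sequence counted from the right,
1-based. -/
def expAt (E : List ℕ) (k : ℕ) : ℕ := E.getD (E.length - k) 0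

/-- `E = [e_p, …, e_1]` is the exponent sequence of a ϕ-normal word: the final block
decomposition is minimal (leading exponent nonzero) and e_k ≥ e_k^min for k < p. -/
def IsNormalSeq (E : List ℕ) : Prop :=
  E ≠ [] ∧ 1 ≤ expAt E E.length ∧ ∀ k, 1 ≤ k → k < E.length → emin k ≤ expAt E k

/-- A word on {σ1, σ2} is ϕ-normal if its (minimal) block decomposition
σ_{[p]}^{e_p} ⋯ σ2^{e_2} σ1^{e_1} satisfies e_k ≥ e_k^min for k < p. -/
def IsPhiNormalWord (w : List (Fin 2)) : Prop :=
  ∃ E, IsNormalSeq E ∧ w = wordOfExpSeq E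

/-- `E` is the exponent sequence of the braid `b`. -/
def HasExpSeq (b : B3P) (E : List ℕ) : Prop :=
  IsNormalSeq E ∧ mkw (wordOfExpSeq E) = b

/-- The exponent sequence of a (nontrivial) braid of B₃⁺. -/
noncomputable def expSeqOf (b : B3P) : List ℕ := by
  classical exact if h : ∃ E, HasExpSeq b E then h.choose else []

/-- The critical position of an exponent sequence: the least r < p with e_r > e_r^min
if it exists, and p otherwise. -/
noncomputable def critPos (E : List ℕ) : ℕ := by
  classical exact
    if h : ∃ r, 1 ≤ r ∧ r < E.length ∧ emin r < expAt E r then Nat.find h else E.length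

/-- The effect of the operation b ↦ b{t} on exponent sequences: remove one letter from
the critical block, and add t letters to the next block if the latter exists. -/
noncomputable def stepSeq (E : List ℕ) (t : ℕ) : List ℕ :=
  let p := E.length
  let r := critPos E
  let E1 := E.set (p - r) (expAt E r - 1)
  if 2 ≤ r then E1.set (p - (r - 1)) (expAt E (r - 1) + t) else E1

/-- The operation b ↦ b{t} of Definition 2.2 (with 1{t} = 1). -/
noncomputable def step (b : B3P) (t : ℕ) : B3P := by
  classical exact if b = 1 then 1 else mkw (wordOfExpSeq (stepSeq (expSeqOf b) t))

/-- The G₃-sequence from b: `gseq b 0 = b`, `gseq b t = (gseq b (t-1)){t}`. -/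
noncomputable def gseq (b : B3P) : ℕ → B3P
  | 0 => b
  | t + 1 => step (gseq b t) (t + 1)

/-- T(b): the length of the G₃-sequence from b, i.e. the least t with b{1}{2}⋯{t} = 1. -/
noncomputable def T (b : B3P) : ℕ := sInf {t | gseq b t = 1}

/-! ### The ordinal of a 3-braid, fundamental sequences, the Hardy hierarchy -/

open Ordinal in
/-- Sum Σ ω^{k-1}·(e_k − e_k^min) over the tail of an exponent sequence. -/
noncomputable def ordSeqAux : List ℕ → Ordinal
  | [] => 0
  | e :: rest =>
    omega0 ^ (rest.length : Ordinal) * ((e - emin (rest.length + 1) : ℕ) : Ordinal)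
      + ordSeqAux rest

open Ordinal in
/-- ord of an exponent sequence (e_p, …, e_1):
ω^{p−1}·e_p + Σ_{p>k≥1} ω^{k−1}·(e_k − e_k^min). -/
noncomputable def ordSeq : List ℕ → Ordinal
  | [] => 0
  | e :: rest => omega0 ^ (rest.length : Ordinal) * (e : Ordinal) + ordSeqAux rest

/-- The ordinal ord(b) < ω^ω attached to a braid of B₃⁺ (with ord(1) = 0). -/
noncomputable def ordOf (b : B3P) : Ordinal := ordSeq (expSeqOf b)

open Ordinal in
/-- Fundamental sequences: 0[x] = 0, (α+1)[x] = α, (γ + ω^{r+1})[x] = γ + ω^r·x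
(CNF decomposition), and (ω^ω)[x] = ω^x. -/
noncomputable def fundSeq (α : Ordinal) (x : ℕ) : Ordinal :=
  open scoped Classical in
  if α = 0 then 0
  else if h : ∃ β, α = β + 1 then h.choose
  else if α = omega0 ^ omega0 then omega0 ^ (x : Ordinal)
  else if h : ∃ p : Ordinal × ℕ, α = p.1 + omega0 ^ ((p.2 : Ordinal) + 1) ∧
      omega0 ^ ((p.2 : Ordinal) + 1) ∣ p.1
    then h.choose.1 + omega0 ^ (h.choose.2 : Ordinal) * (x : Ordinal)
  else 0

open Ordinal in
theorem fundSeq_lt (α : Ordinal) (x : ℕ) (h0 : ¬α = 0) (hs : ¬∃ β, α = β + 1) :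
    fundSeq α x < α := by
  classical
  rw [fundSeq]
  rw [if_neg h0, dif_neg hs]
  by_cases hw : α = omega0 ^ omega0
  · rw [if_pos hw, hw]
    exact (Ordinal.opow_lt_opow_iff_right Ordinal.one_lt_omega0).mpr (Ordinal.nat_lt_omega0 x)
  · rw [if_neg hw]
    by_cases hd : ∃ p : Ordinal × ℕ, α = p.1 + omega0 ^ ((p.2 : Ordinal) + 1) ∧
        omega0 ^ ((p.2 : Ordinal) + 1) ∣ p.1
    · rw [dif_pos hd]
      obtain ⟨hα, -⟩ := hd.choose_spec
      have hlt : omega0 ^ ((hd.choose.2 : Ordinal)) * (x : Ordinal)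
          < omega0 ^ ((hd.choose.2 : Ordinal) + 1) := by
        rw [Ordinal.add_one_eq_succ, Ordinal.opow_succ]
        exact mul_lt_mul_of_pos_left (Ordinal.natCast_lt_omega0 x)
          (Ordinal.opow_pos _ Ordinal.omega0_pos)
      calc hd.choose.1 + omega0 ^ (hd.choose.2 : Ordinal) * (x : Ordinal)
          < hd.choose.1 + omega0 ^ ((hd.choose.2 : Ordinal) + 1) :=
            (add_lt_add_iff_left _).mpr hlt
        _ = α := hα.symm
    · rw [dif_neg hd]
      exact pos_iff_ne_zero.mpr h0

open Ordinal in
open scoped Classical in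
/-- The Hardy hierarchy: H_0(x) = x, H_{α+1}(x) = H_α(x+1), H_λ(x) = H_{λ[x]}(x+1). -/
noncomputable def hardy (α : Ordinal) (x : ℕ) : ℕ :=
  if α = 0 then x
  else if h : ∃ β, α = β + 1 then hardy h.choose (x + 1)
  else hardy (fundSeq α x) (x + 1)
termination_by α
decreasing_by
  · have hs := h.choose_spec
    have h2 : h.choose < h.choose + 1 := by
      rw [Ordinal.add_one_eq_succ]; exact Order.lt_succ _
    exact lt_of_lt_of_eq h2 hs.symm
  · exact fundSeq_lt _ _ (by assumption) (by assumption)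

/-! ### Garside complexity -/

/-- The Garside complexity ‖b‖: the least ℓ such that b left-divides Δ₃^ℓ. -/
noncomputable def compl (b : B3P) : ℕ := sInf {ℓ | ∃ c, b * c = Δ ^ ℓ}

/-!
Existence and uniqueness both come from normalising from the left. Prepending a letter to a
ϕ-normal word either enlarges the top block or opens a new one, except when the top block is a
single letter `x` above a block `y^a`; then `y x y^a x^c ⋯ = x^a y x^{c+1} ⋯`, and the relation
`x y x^k = y^k x y` lets the lone `y` travel down until it forms the second block. On exponent
sequences this is a map `nfCons`, and a short case analysis shows that it satisfies the braid
relation, so it defines an action of `B₃⁺` on normal sequences. Acting on the empty sequence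
yields, for each braid, a normal sequence whose word represents it, and this sequence is `E`
itself for the braid of the word of `E`.
-/

lemma emin_of_three_le {k : ℕ} (h : 3 ≤ k) : emin k = 2 := by
  unfold emin; split <;> omega

lemma one_le_emin {k : ℕ} (h : 2 ≤ k) : 1 ≤ emin k := by
  unfold emin; split <;> omega

lemma emin_le_two (k : ℕ) : emin k ≤ 2 := by
  unfold emin; split <;> omega

lemma letterOf_eq_letterOf_iff {a b : ℕ} : letterOf a = letterOf b ↔ a % 2 = b % 2 := by
  unfold letterOf; split_ifs <;> omega

lemma letterOf_congr {a b : ℕ} (h : a % 2 = b % 2) : letterOf a = letterOf b :=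
  letterOf_eq_letterOf_iff.mpr h

lemma letterOf_ne_letterOf {a b : ℕ} (h : a % 2 ≠ b % 2) : letterOf a ≠ letterOf b :=
  fun h' => h (letterOf_eq_letterOf_iff.mp h')

lemma letterOf_add_two (k : ℕ) : letterOf (k + 2) = letterOf k :=
  letterOf_congr (by omega)

lemma letterOf_succ_ne (k : ℕ) : letterOf (k + 1) ≠ letterOf k :=
  letterOf_ne_letterOf (by omega)

lemma eq_letterOf_add_one_of_ne {i : Fin 2} {k : ℕ} (h : i ≠ letterOf k) :
    i = letterOf (k + 1) := by
  have := letterOf_succ_ne k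
  omega

def gen (i : Fin 2) : B3P := mkw [i]

lemma mkw_append (u v : List (Fin 2)) : mkw (u ++ v) = mkw u * mkw v := by
  simp only [mkw, FreeMonoid.ofList_append, map_mul]

lemma mkw_cons (i : Fin 2) (w : List (Fin 2)) : mkw (i :: w) = gen i * mkw w :=
  mkw_append [i] w

lemma mkw_replicate (k : ℕ) (i : Fin 2) : mkw (List.replicate k i) = gen i ^ k := by
  induction k with
  | zero => rfl
  | succ k ih => rw [List.replicate_succ, mkw_cons, ih, pow_succ']

lemma mkw_wordOfExpSeq_cons (e : ℕ) (l : List ℕ) :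
    mkw (wordOfExpSeq (e :: l)) = gen (letterOf (l.length + 1)) ^ e * mkw (wordOfExpSeq l) := by
  rw [wordOfExpSeq, mkw_append, mkw_replicate]

lemma gen_braid {i j : Fin 2} (h : i ≠ j) : gen i * gen j * gen i = gen j * gen i * gen j := by
  have base : gen 0 * gen 1 * gen 0 = gen 1 * gen 0 * gen 1 :=
    (Con.eq _).mpr (ConGen.Rel.of _ _ ⟨rfl, rfl⟩)
  fin_cases i <;> fin_cases j
  exacts [absurd rfl h, base, base.symm, absurd rfl h]

lemma gen_braid_pow {i j : Fin 2} (h : i ≠ j) (k : ℕ) :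
    gen i * gen j * gen i ^ k = gen j ^ k * gen i * gen j := by
  induction k with
  | zero => simp
  | succ k ih =>
    calc gen i * gen j * gen i ^ (k + 1) = gen i * gen j * gen i * gen i ^ k := by
          rw [pow_succ', mul_assoc _ (gen i)]
      _ = gen j * (gen i * gen j * gen i ^ k) := by rw [gen_braid h]; simp only [mul_assoc]
      _ = gen j ^ (k + 1) * gen i * gen j := by rw [ih]; simp only [pow_succ', mul_assoc]

lemma gen_mul_induction {P : B3P → Prop} (one : P 1) (gen_mul : ∀ i b, P b → P (gen i * b))
    (b : B3P) : P b := by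
  induction b using Con.induction_on with | H x => ?_
  induction x using FreeMonoid.inductionOn' with
  | one => exact one
  | of_mul i x ih => exact gen_mul i _ ih

def AboveEmin : List ℕ → Prop
  | [] => True
  | e :: l => emin (l.length + 1) ≤ e ∧ AboveEmin l

def IsNormalOrNil : List ℕ → Prop
  | [] => True
  | e :: l => 1 ≤ e ∧ AboveEmin l

lemma expAt_cons_length (e : ℕ) (l : List ℕ) : expAt (e :: l) (l.length + 1) = e := by
  simp [expAt]

lemma expAt_cons_of_le {k : ℕ} (e : ℕ) {l : List ℕ} (hk : k ≤ l.length) :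
    expAt (e :: l) k = expAt l k := by
  rw [expAt, expAt, List.length_cons, show l.length + 1 - k = l.length - k + 1 by omega,
    List.getD_cons_succ]

lemma aboveEmin_iff {l : List ℕ} :
    AboveEmin l ↔ ∀ k, 1 ≤ k → k ≤ l.length → emin k ≤ expAt l k := by
  induction l with
  | nil =>
    exact iff_of_true trivial fun k hk hk0 => absurd hk0 (by simp only [List.length_nil]; omega)
  | cons e l ih =>
    rw [AboveEmin, ih]
    constructor
    · rintro ⟨he, hl⟩ k hk1 hk
      rcases Nat.lt_or_ge k (l.length + 1) with hlt | hge
      · rw [expAt_cons_of_le e (by omega)]; exact hl k hk1 (by omega)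
      · obtain rfl : k = l.length + 1 := by simp only [List.length_cons] at hk; omega
        rwa [expAt_cons_length]
    · intro h
      refine ⟨?_, fun k hk1 hk => ?_⟩
      · simpa [expAt_cons_length] using h (l.length + 1) (by omega) (by simp)
      · simpa [expAt_cons_of_le e hk] using h k hk1 (by simp only [List.length_cons]; omega)

lemma isNormalSeq_iff {E : List ℕ} : IsNormalSeq E ↔ E ≠ [] ∧ IsNormalOrNil E := by
  cases E with
  | nil => simp [IsNormalSeq]
  | cons e l =>
    simp only [IsNormalSeq, IsNormalOrNil, aboveEmin_iff, List.length_cons, expAt_cons_length,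
      ne_eq, reduceCtorEq, not_false_eq_true, true_and]
    refine and_congr_right fun _ => forall_congr' fun k => forall_congr' fun hk1 => ?_
    constructor
    · intro h hk
      rw [← expAt_cons_of_le e hk]
      exact h (by omega)
    · intro h hk
      rw [expAt_cons_of_le e (by omega)]
      exact h (by omega)

/-- The exponent sequence of the normal form of `x^a · y · w`, where `w = x^b ⋯` is the word of
`b :: l`: the relation `x y x^b = y^b x y` moves the lone letter `y` down, one block at a time. -/
def cascade : ℕ → ℕ → List ℕ → List ℕ
  | a, b, [] => [a, 1, b]
  | a, b, c :: l => (a - 1) :: cascade b (c + 1) l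

lemma length_cascade (a b : ℕ) (l : List ℕ) : (cascade a b l).length = l.length + 3 := by
  induction l generalizing a b with
  | nil => rfl
  | cons c l ih => simp [cascade, ih]

lemma aboveEmin_cascade {a c : ℕ} {l : List ℕ} (ha : emin (l.length + 2) < a)
    (hl : AboveEmin (c :: l)) : AboveEmin (cascade a (c + 1) l) := by
  induction l generalizing a c with
  | nil =>
    exact ⟨ha, le_rfl, Nat.zero_le _, trivial⟩
  | cons d l ih =>
    obtain ⟨hc, hl⟩ := hl
    have hc : emin (l.length + 2) ≤ c := hc
    refine ⟨?_, ih (by omega) hl⟩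
    rw [length_cascade, emin_of_three_le (by omega)]
    rw [emin_of_three_le (by simp)] at ha
    omega

lemma isNormalOrNil_cascade {a c : ℕ} {l : List ℕ} (h : AboveEmin (a :: c :: l)) :
    IsNormalOrNil (cascade a (c + 1) l) := by
  obtain ⟨ha, hc, hl⟩ := h
  cases l with
  | nil => exact ⟨ha, by simp [AboveEmin, emin]⟩
  | cons d l =>
    have hc : emin (l.length + 2) ≤ c := hc
    rw [List.length_cons, List.length_cons, emin_of_three_le (by omega)] at ha
    exact ⟨by omega, aboveEmin_cascade (by omega) hl⟩

lemma mkw_wordOfExpSeq_cascade {a c : ℕ} {l : List ℕ} (ha : 1 ≤ a) :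
    mkw (wordOfExpSeq (cascade a (c + 1) l)) =
      gen (letterOf (l.length + 3)) ^ a * gen (letterOf (l.length + 2)) *
        mkw (wordOfExpSeq ((c + 1) :: l)) := by
  induction l generalizing a c with
  | nil => simp [cascade, mkw_wordOfExpSeq_cons, mul_assoc]
  | cons d l ih =>
    obtain ⟨a, rfl⟩ := Nat.exists_eq_add_of_le' ha
    simp only [cascade, mkw_wordOfExpSeq_cons, length_cascade, List.length_cons,
      ih (Nat.succ_pos c), add_tsub_cancel_right, Nat.add_assoc, Nat.reduceAdd, letterOf_add_two]
    set x := gen (letterOf l.length)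
    set y := gen (letterOf (l.length + 1))
    calc x ^ a * (y ^ (c + 1) * x * (y ^ (d + 1) * mkw (wordOfExpSeq l)))
        = x ^ a * (y ^ (c + 1) * x * y) * (y ^ d * mkw (wordOfExpSeq l)) := by
          rw [pow_succ' y d]; simp only [mul_assoc]
      _ = x ^ a * (x * y * x ^ (c + 1)) * (y ^ d * mkw (wordOfExpSeq l)) := by
          rw [gen_braid_pow (letterOf_succ_ne _).symm]
      _ = x ^ (a + 1) * y * (x ^ (c + 1) * (y ^ d * mkw (wordOfExpSeq l))) := by
          rw [pow_succ x a]; simp only [mul_assoc]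

/-- The exponent sequence of the normal form of `σ_{i+1} · w`, for `w` the normal word of `E`. -/
def nfCons (i : Fin 2) : List ℕ → List ℕ
  | [] => if i = 0 then [1] else [1, 0]
  | [e] => if i = 0 then [e + 1] else [1, e]
  | [e, c] => if i = 1 then [e + 1, c] else [1, e, c]
  | e :: a :: c :: l =>
    if i = letterOf (l.length + 3) then (e + 1) :: a :: c :: l
    else if 2 ≤ e then 1 :: e :: a :: c :: l
    else cascade a (c + 1) l

lemma nfCons_of_eq {i : Fin 2} {e : ℕ} {l : List ℕ} (h : i = letterOf (l.length + 1)) :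
    nfCons i (e :: l) = (e + 1) :: l := by
  match l with
  | [] => simp_all [nfCons, letterOf]
  | [c] => simp_all [nfCons, letterOf]
  | _ :: _ :: _ => simp_all [nfCons]

lemma nfCons_of_ne {i : Fin 2} {e : ℕ} {l : List ℕ} (h : i ≠ letterOf (l.length + 1))
    (he : emin (l.length + 1) ≤ e) : nfCons i (e :: l) = 1 :: e :: l := by
  match l with
  | [] => simp_all [nfCons, letterOf]
  | [c] => simp_all [nfCons, letterOf]
  | _ :: _ :: l => simp_all [nfCons, emin_of_three_le]

lemma nfCons_of_ne_of_lt {i : Fin 2} {e a c : ℕ} {l : List ℕ}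
    (h : i ≠ letterOf (l.length + 3)) (he : e < 2) :
    nfCons i (e :: a :: c :: l) = cascade a (c + 1) l := by
  simp [nfCons, h, not_le.mpr he]

lemma iterate_nfCons_of_eq {i : Fin 2} {e : ℕ} {l : List ℕ} (h : i = letterOf (l.length + 1))
    (k : ℕ) : (nfCons i)^[k] (e :: l) = (e + k) :: l := by
  induction k with
  | zero => rfl
  | succ k ih => rw [Function.iterate_succ_apply', ih, nfCons_of_eq h, Nat.add_assoc]

lemma isNormalOrNil_nfCons (i : Fin 2) {E : List ℕ} (hE : IsNormalOrNil E) :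
    IsNormalOrNil (nfCons i E) := by
  match E, hE with
  | [], _ => fin_cases i <;> simp [nfCons, IsNormalOrNil, AboveEmin, emin]
  | e :: l, ⟨he, hl⟩ =>
    by_cases hi : i = letterOf (l.length + 1)
    · rw [nfCons_of_eq hi]; exact ⟨by omega, hl⟩
    by_cases hle : emin (l.length + 1) ≤ e
    · rw [nfCons_of_ne hi hle]; exact ⟨le_rfl, hle, hl⟩
    match l, hl with
    | [], _ => exact absurd (Nat.zero_le e) hle
    | [_], _ => exact absurd he hle
    | a :: c :: l, hl =>
      rw [nfCons_of_ne_of_lt hi (by rw [emin_of_three_le (by simp)] at hle; omega)]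
      exact isNormalOrNil_cascade hl

lemma mkw_wordOfExpSeq_nfCons (i : Fin 2) {E : List ℕ} (hE : IsNormalOrNil E) :
    mkw (wordOfExpSeq (nfCons i E)) = gen i * mkw (wordOfExpSeq E) := by
  match E, hE with
  | [], _ => fin_cases i <;> rfl
  | e :: l, ⟨he, hl⟩ =>
    by_cases hi : i = letterOf (l.length + 1)
    · rw [nfCons_of_eq hi, mkw_wordOfExpSeq_cons, mkw_wordOfExpSeq_cons, hi, pow_succ', mul_assoc]
    have hi' := eq_letterOf_add_one_of_ne hi
    by_cases hle : emin (l.length + 1) ≤ e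
    · rw [nfCons_of_ne hi hle, mkw_wordOfExpSeq_cons, List.length_cons, ← hi', pow_one]
    match l, hl with
    | [], _ => exact absurd (Nat.zero_le e) hle
    | [_], _ => exact absurd he hle
    | a :: c :: l, ⟨ha, _⟩ =>
      have he1 : e = 1 := by rw [emin_of_three_le (by simp)] at hle; omega
      subst he1
      have ha : 1 ≤ a := le_trans (one_le_emin (by simp)) ha
      rw [nfCons_of_ne_of_lt hi (by omega), mkw_wordOfExpSeq_cascade ha]
      simp only [mkw_wordOfExpSeq_cons, hi', List.length_cons, Nat.add_assoc, Nat.reduceAdd,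
        letterOf_add_two]
      rw [pow_one, pow_succ']
      simp only [← mul_assoc]
      rw [gen_braid_pow (letterOf_succ_ne _).symm]

lemma nfCons_braid_of_three_le_length {e c d : ℕ} {l : List ℕ}
    (hX : IsNormalOrNil (e :: c :: d :: l)) :
    nfCons (letterOf (l.length + 3)) (nfCons (letterOf (l.length + 4))
        (nfCons (letterOf (l.length + 3)) (e :: c :: d :: l))) =
      nfCons (letterOf (l.length + 4)) (nfCons (letterOf (l.length + 3))
        (nfCons (letterOf (l.length + 4)) (e :: c :: d :: l))) := by
  obtain ⟨he, hc, -⟩ := hX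
  have hc : emin (l.length + 2) ≤ c := hc
  have lhs : nfCons (letterOf (l.length + 3)) (nfCons (letterOf (l.length + 4))
      (nfCons (letterOf (l.length + 3)) (e :: c :: d :: l))) = e :: cascade (c + 1) (d + 1) l := by
    rw [nfCons_of_eq (letterOf_congr (by grind)),
      nfCons_of_ne (letterOf_ne_letterOf (by grind)) (le_trans (emin_le_two _) (by omega)),
      nfCons_of_ne_of_lt (letterOf_ne_letterOf (by grind)) (by omega)]
    rfl
  rw [lhs]
  rcases Nat.lt_or_ge e 2 with he2 | he2
  · obtain rfl : e = 1 := by omega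
    rw [nfCons_of_ne_of_lt (letterOf_ne_letterOf (by omega)) he2]
    cases l with
    | nil =>
      simp only [cascade]
      rw [nfCons_of_eq (letterOf_congr (by grind)),
        nfCons_of_ne (letterOf_ne_letterOf (by grind)) (Nat.succ_le_succ hc)]
    | cons f l =>
      rw [emin_of_three_le (by simp)] at hc
      simp only [cascade, Nat.add_sub_cancel]
      rw [nfCons_of_eq (letterOf_congr (by grind [length_cascade])),
        nfCons_of_ne (letterOf_ne_letterOf (by grind [length_cascade]))
          (le_trans (emin_le_two _) (by omega)), Nat.sub_add_cancel (by omega)]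
  · rw [nfCons_of_ne (letterOf_ne_letterOf (by grind)) (le_trans (emin_le_two _) he2),
      nfCons_of_ne_of_lt (letterOf_ne_letterOf (by grind)) (by omega), cascade,
      nfCons_of_eq (letterOf_congr (by grind [length_cascade])), Nat.sub_add_cancel (by omega)]

lemma nfCons_braid {X : List ℕ} (hX : IsNormalOrNil X) :
    nfCons 0 (nfCons 1 (nfCons 0 X)) = nfCons 1 (nfCons 0 (nfCons 1 X)) := by
  match X, hX with
  | [], _ => rfl
  | [e], _ => simp [nfCons, cascade, letterOf]
  | [e, c], _ => simp [nfCons, cascade, letterOf]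
  | e :: c :: d :: l, hX =>
    have h := nfCons_braid_of_three_le_length hX
    rcases Nat.mod_two_eq_zero_or_one l.length with hl | hl
    · rwa [show letterOf (l.length + 3) = 0 from if_pos (by omega),
        show letterOf (l.length + 4) = 1 from if_neg (by omega)] at h
    · rwa [show letterOf (l.length + 3) = 1 from if_neg (by omega),
        show letterOf (l.length + 4) = 0 from if_pos (by omega), eq_comm] at h

def nfAction : B3P →* Function.End {E : List ℕ // IsNormalOrNil E} :=
  braidCon.lift (FreeMonoid.lift fun i E => ⟨nfCons i E.1, isNormalOrNil_nfCons i E.2⟩) <|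
    Con.conGen_le.mpr <| by
      rintro _ _ ⟨rfl, rfl⟩
      funext ⟨X, hX⟩
      exact Subtype.ext (nfCons_braid hX)

lemma nfAction_gen_apply (i : Fin 2) (X : {E : List ℕ // IsNormalOrNil E}) :
    (nfAction (gen i) X).1 = nfCons i X.1 := rfl

lemma nfAction_mul_apply (a b : B3P) (X : {E : List ℕ // IsNormalOrNil E}) :
    nfAction (a * b) X = nfAction a (nfAction b X) := by
  rw [map_mul]; rfl

lemma nfAction_gen_pow_apply (i : Fin 2) (k : ℕ) (X : {E : List ℕ // IsNormalOrNil E}) :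
    (nfAction (gen i ^ k) X).1 = (nfCons i)^[k] X.1 := by
  induction k generalizing X with
  | zero => rfl
  | succ k ih => rw [pow_succ, nfAction_mul_apply, ih, nfAction_gen_apply,
      Function.iterate_succ_apply]

lemma mkw_wordOfExpSeq_nfAction (b : B3P) (X : {E : List ℕ // IsNormalOrNil E}) :
    mkw (wordOfExpSeq (nfAction b X).1) = b * mkw (wordOfExpSeq X.1) := by
  induction b using gen_mul_induction generalizing X with
  | one => rw [map_one, one_mul]; rfl
  | gen_mul i b ih =>
    rw [nfAction_mul_apply, nfAction_gen_apply,
      mkw_wordOfExpSeq_nfCons i (nfAction b X).2, ih, mul_assoc]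

def normalForm (b : B3P) : List ℕ := (nfAction b ⟨[], trivial⟩).1

lemma isNormalOrNil_normalForm (b : B3P) : IsNormalOrNil (normalForm b) :=
  (nfAction b ⟨[], trivial⟩).2

lemma normalForm_mul (a b : B3P) :
    normalForm (a * b) = (nfAction a ⟨normalForm b, isNormalOrNil_normalForm b⟩).1 := by
  rw [normalForm, nfAction_mul_apply]; rfl

lemma mkw_wordOfExpSeq_normalForm (b : B3P) : mkw (wordOfExpSeq (normalForm b)) = b := by
  rw [normalForm, mkw_wordOfExpSeq_nfAction]
  exact mul_one b

lemma normalForm_mkw_wordOfExpSeq {E : List ℕ} (hE : IsNormalOrNil E) :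
    normalForm (mkw (wordOfExpSeq E)) = E := by
  induction E with
  | nil => rfl
  | cons e l ih =>
    obtain ⟨he, hl⟩ := hE
    -- `l` need not be normal: for `l = [0]`, whose word is empty, `normalForm` returns `[]`.
    have hstart :
        nfCons (letterOf (l.length + 1)) (normalForm (mkw (wordOfExpSeq l))) = 1 :: l := by
      match l, hl with
      | [], _ => rfl
      | [0], _ => rfl
      | [c + 1], _ =>
        rw [ih ⟨by omega, trivial⟩]
        exact nfCons_of_ne (letterOf_succ_ne _) (Nat.zero_le _)
      | c :: d :: l, ⟨hc, hl⟩ =>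
        rw [ih ⟨le_trans (one_le_emin (by simp)) hc, hl⟩]
        exact nfCons_of_ne (letterOf_succ_ne _) hc
    obtain ⟨k, rfl⟩ := Nat.exists_eq_add_of_le' he
    rw [mkw_wordOfExpSeq_cons, normalForm_mul, nfAction_gen_pow_apply,
      Function.iterate_succ_apply, hstart, iterate_nfCons_of_eq rfl, Nat.add_comm]

/-- Every nontrivial element of the positive 3-strand braid monoid B₃⁺ is
represented by exactly one ϕ-normal word on the alphabet {σ1, σ2}. -/
theorem phi_normal_exists_unique (b : B3P) (hb : b ≠ 1) :
    ∃! w : List (Fin 2), IsPhiNormalWord w ∧ mkw w = b := by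
  have hnf : normalForm b ≠ [] := fun h => hb <| by
    rw [← mkw_wordOfExpSeq_normalForm b, h]; rfl
  refine ⟨wordOfExpSeq (normalForm b),
    ⟨⟨normalForm b, isNormalSeq_iff.mpr ⟨hnf, isNormalOrNil_normalForm b⟩, rfl⟩,
      mkw_wordOfExpSeq_normalForm b⟩, ?_⟩
  rintro _ ⟨⟨E, hE, rfl⟩, rfl⟩
  rw [normalForm_mkw_wordOfExpSeq (isNormalSeq_iff.mp hE).2]

end Braid3
end

section
/- For every special braid b (in any B_n^+), the G∞^sp-sequence from b is finite: there exists a natural number t such that b{1}^sp{2}^sp⋯{t}^sp = 1. -/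
namespace BraidInf

/-! ### The positive braid monoid B∞⁺ on infinitely many strands.
Letters are natural numbers: letter `i` stands for the Artin generator σ_{i+1}. -/

def braidRel : FreeMonoid ℕ → FreeMonoid ℕ → Prop := fun u v =>
  (∃ i j, i + 2 ≤ j ∧ u = FreeMonoid.of i * FreeMonoid.of j ∧
    v = FreeMonoid.of j * FreeMonoid.of i) ∨
  (∃ i, u = FreeMonoid.of i * FreeMonoid.of (i + 1) * FreeMonoid.of i ∧
    v = FreeMonoid.of (i + 1) * FreeMonoid.of i * FreeMonoid.of (i + 1))

def braidCon : Con (FreeMonoid ℕ) := conGen braidRel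

/-- The positive braid monoid B∞⁺ (the union of all the B_n⁺). -/
abbrev BIM := braidCon.Quotient

/-- The element of B∞⁺ represented by a word (letter `i` is σ_{i+1}). -/
def mkw (w : List ℕ) : BIM := braidCon.mk' (FreeMonoid.ofList w)

/-! ### The braid group B∞ with the same presentation. -/

def grpRels : Set (FreeGroup ℕ) :=
  { r | (∃ i j, i + 2 ≤ j ∧
          r = FreeGroup.of i * FreeGroup.of j * (FreeGroup.of j * FreeGroup.of i)⁻¹) ∨
        (∃ i, r = FreeGroup.of i * FreeGroup.of (i + 1) * FreeGroup.of i *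
          (FreeGroup.of (i + 1) * FreeGroup.of i * FreeGroup.of (i + 1))⁻¹) }

abbrev BIG := PresentedGroup grpRels

def g (i : ℕ) : BIG := PresentedGroup.of i

theorem grp_rel (u v : FreeGroup ℕ) (h : (u * v⁻¹) ∈ grpRels) :
    (QuotientGroup.mk u : BIG) = QuotientGroup.mk v := by
  rw [QuotientGroup.eq]
  have hmem : u * v⁻¹ ∈ Subgroup.normalClosure grpRels := Subgroup.subset_normalClosure h
  have h2 := (Subgroup.normalClosure_normal (s := grpRels)).conj_mem _ hmem u⁻¹
  simp only [inv_inv] at h2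
  have h3 : u⁻¹ * (u * v⁻¹) * u = (u⁻¹ * v)⁻¹ := by group
  rw [h3] at h2
  exact (Subgroup.inv_mem_iff _).mp h2

/-- The canonical embedding of B∞⁺ into B∞. -/
def ι : BIM →* BIG :=
  Con.lift _ (FreeMonoid.lift fun i => g i) (by
    apply Con.conGen_le.mpr
    rintro u v (⟨i, j, hij, hu, hv⟩ | ⟨i, hu, hv⟩) <;> subst hu <;> subst hv <;>
      rw [Con.ker_rel] <;> simp only [map_mul, FreeMonoid.lift_eval_of]
    · exact grp_rel _ _ (Or.inl ⟨i, j, hij, rfl⟩)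
    · exact grp_rel _ _ (Or.inr ⟨i, rfl⟩))

/-! ### The braid order -/

/-- Evaluation in B∞ of a signed word: a letter `(i, true)` is σ_{i+1} and
`(i, false)` is σ_{i+1}⁻¹. -/
def evalSW (w : List (ℕ × Bool)) : BIG :=
  (w.map fun l => if l.2 then g l.1 else (g l.1)⁻¹).prod

/-- A signed word is σ-positive if the generator of highest occurring index occurs,
and occurs only positively. -/
def SigmaPos (w : List (ℕ × Bool)) : Prop :=
  ∃ i : ℕ, (i, true) ∈ w ∧ (i, false) ∉ w ∧ ∀ l ∈ w, l.1 ≤ i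

/-- The braid order on B∞, restricted to B∞⁺. -/
def blt (a b : BIM) : Prop := ∃ w, SigmaPos w ∧ evalSW w = (ι a)⁻¹ * ι b

/-! ### Skew products and special braids -/

/-- The separating word σ1σ2²⋯σ_{n-2}²σ_{n-1} (as a word, for n ≥ 3). -/
def sepWord (n : ℕ) : List ℕ :=
  [0] ++ ((List.range (n - 3)).flatMap fun j => [j + 1, j + 1]) ++ [n - 2]

/-- The flip automorphism φ_n (σ_i ↦ σ_{n-i}) at the level of words. -/
def flipWord (n : ℕ) (w : List ℕ) : List ℕ := w.map fun i => n - 2 - i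

/-- φ̃_n(b) = σ1σ2²⋯σ_{n-2}²σ_{n-1} · φ_n(b) · σ_{n-1}σ_{n-2}²⋯σ2²σ1, on words. -/
def phiTilde (n : ℕ) (w : List ℕ) : List ℕ :=
  sepWord n ++ flipWord n w ++ (sepWord n).reverse

/-- The skew product ⟨b_p, …, b_1⟩_{n,p} of the words `ws = [b_p, …, b_1]`:
the product where φ̃_n is applied to every second factor counting from the right,
the rightmost factor being unmodified. -/
def skewProd (n : ℕ) (ws : List (List ℕ)) : List ℕ :=
  ((ws.reverse.zipIdx.map fun q => if q.2 % 2 = 1 then phiTilde n q.1 else q.1).reverse).flatten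

/-- Special n-braids (as their canonical words): every word σ1^e is 2-special;
for n ≥ 3, the trivial word is n-special, and so is any skew product
⟨b_p, …, b_1⟩_{n,p} of special (n−1)-braids with b_p nontrivial. -/
inductive IsSpecial : ℕ → List ℕ → Prop
  | of2 (e : ℕ) : IsSpecial 2 (List.replicate e 0)
  | triv (n : ℕ) (h : 3 ≤ n) : IsSpecial n []
  | skew (n : ℕ) (h : 3 ≤ n) (ws : List (List ℕ)) (hne : ws ≠ [])
      (hsp : ∀ w ∈ ws, IsSpecial (n - 1) w) (hhd : ws.head! ≠ []) :
      IsSpecial n (skewProd n ws)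

/-- θ_{n,t} = ⟨σ1, 1, …, 1⟩_{n,t} (skew product with t components, the leftmost
being σ1 and the others trivial); at level n = 2 the skew product degenerates and
θ_{2,t} = σ1^t. -/
def theta (n t : ℕ) : List ℕ :=
  if n ≤ 2 then List.replicate t 0
  else skewProd n ([[0]] ++ List.replicate (t - 1) [])

/-- The operation b ↦ b{t}^sp of Definition 4.8, as a relation on the canonical
words of special braids. In the cases for n ≥ 3, the source is
b = ⟨b_p, …, b_{r+1}, b_r, 1, …, 1⟩_{n,p} with `bs = [b_p, …, b_{r+1}]`, b_r the
rightmost nontrivial component, and b'_r = b_r{t}^sp. -/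
inductive SpStep : ℕ → List ℕ → ℕ → List ℕ → Prop
  | base (e t : ℕ) :
      SpStep 2 (List.replicate (e + 1) 0) t (List.replicate e 0)
  | case1 (n : ℕ) (h : 3 ≤ n) (bs : List (List ℕ)) (br br' : List ℕ) (r t : ℕ)
      (hr : 1 ≤ r)
      (hbs : ∀ w ∈ bs, IsSpecial (n - 1) w) (hbr : IsSpecial (n - 1) br)
      (hbrne : br ≠ []) (hhd : (bs ++ [br]).head! ≠ [])
      (hsub : SpStep (n - 1) br t br')
      (hcase : r = 1 ∨ br ≠ br' ++ [0]) :
      SpStep n (skewProd n (bs ++ [br] ++ List.replicate (r - 1) [])) t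
        (skewProd n (bs ++ [br'] ++ List.replicate (r - 1) []))
  | case2 (n : ℕ) (h : 3 ≤ n) (bs : List (List ℕ)) (br br' : List ℕ) (r t : ℕ)
      (hr : 2 ≤ r)
      (hbs : ∀ w ∈ bs, IsSpecial (n - 1) w) (hbr : IsSpecial (n - 1) br)
      (hbrne : br ≠ []) (hhd : (bs ++ [br]).head! ≠ [])
      (hsub : SpStep (n - 1) br t br')
      (heq : br = br' ++ [0]) (hcond : br' ≠ [] ∨ bs ≠ []) :
      SpStep n (skewProd n (bs ++ [br] ++ List.replicate (r - 1) [])) t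
        (skewProd n (bs ++ [br', theta (n - 1) t] ++ List.replicate (r - 2) []))
  | case3 (n : ℕ) (h : 3 ≤ n) (r t : ℕ) (hr : 2 ≤ r) :
      SpStep n (skewProd n ([[0]] ++ List.replicate (r - 1) [])) t
        (skewProd n ([theta (n - 1) t] ++ List.replicate (r - 2) []))

/-!
A special braid is recorded by the tree of its skew-product decompositions. One `{t}^sp` step
replaces the rightmost nontrivial component `b_r` by `b_r{t}^sp` and, in the second case,
fills the trivial slot to its right with `θ`; in the third case the decomposition gets shorter.
So the step strictly decreases the tree for the order comparing decompositions first by length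
and then lexicographically from the left, componentwise by the same order one level down. This
iterated shortlex order is well founded, hence the sequence reaches `1`.
-/

theorem _root_.List.exists_eq_append_cons_replicate {α : Type*} {a : α} :
    ∀ {l : List α}, (∃ x ∈ l, x ≠ a) → ∃ bs b z, l = bs ++ b :: List.replicate z a ∧ b ≠ a
  | [], ⟨_, hx, _⟩ => absurd hx List.not_mem_nil
  | y :: l, h => by
    by_cases hl : ∃ x ∈ l, x ≠ a
    · obtain ⟨bs, b, z, rfl, hb⟩ := List.exists_eq_append_cons_replicate hl
      exact ⟨y :: bs, b, z, rfl, hb⟩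
    · push Not at hl
      refine ⟨[], y, l.length, by simpa using List.eq_replicate_iff.2 ⟨rfl, hl⟩, ?_⟩
      obtain ⟨x, hx, hxa⟩ := h
      rcases List.mem_cons.1 hx with rfl | hx
      exacts [hxa, absurd (hl x hx) hxa]

@[simp] theorem skewProd_nil (n : ℕ) : skewProd n [] = [] := rfl

@[simp] theorem skewProd_singleton (n : ℕ) (w : List ℕ) : skewProd n [w] = w := by
  simp [skewProd, List.zipIdx]

theorem skewProd_ne_nil {n : ℕ} {ws : List (List ℕ)} (h : 2 ≤ ws.length) :
    skewProd n ws ≠ [] := by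
  rw [← List.length_reverse] at h
  rcases hws : ws.reverse with _ | ⟨a, _ | ⟨b, rest⟩⟩
  · simp [hws] at h
  · simp [hws] at h
  · simp [skewProd, hws, List.zipIdx_cons, phiTilde, sepWord]

/-- The `G∞^sp`-sequence from `w` whose steps use the indices `t + 1, t + 2, …` reaches `1`. -/
inductive SpReaches (n : ℕ) : ℕ → List ℕ → Prop
  | nil (t : ℕ) : SpReaches n t []
  | cons {t : ℕ} {w w' : List ℕ} : SpStep n w (t + 1) w' → SpReaches n (t + 1) w' →
      SpReaches n t w

theorem SpReaches.exists_seq {n t : ℕ} {w : List ℕ} (h : SpReaches n t w) :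
    ∃ (N : ℕ) (c : ℕ → List ℕ), c 0 = w ∧
      (∀ s < N, SpStep n (c s) (t + s + 1) (c (s + 1))) ∧ c N = [] := by
  induction h with
  | nil t => exact ⟨0, fun _ => [], rfl, by simp, rfl⟩
  | @cons t w w' hstep _ ih =>
    obtain ⟨N, c, hc0, hc, hcN⟩ := ih
    refine ⟨N + 1, fun | 0 => w | s + 1 => c s, rfl, ?_, hcN⟩
    rintro (_ | s) hs
    · simpa [hc0] using hstep
    · rw [show t + (s + 1) + 1 = t + 1 + s + 1 by omega]
      exact hc s (by omega)

theorem IsSpecial.two_le {n : ℕ} {w : List ℕ} (h : IsSpecial n w) : 2 ≤ n := by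
  cases h <;> omega

/-- `SpCode k` encodes special `(k + 2)`-braids: at level 2 the exponent `e` of `σ₁ ^ e`, above
it the list `[b_p, …, b_1]` of skew-product components. -/
@[reducible] def SpCode : ℕ → Type
  | 0 => ℕ
  | k + 1 => List (SpCode k)

namespace SpCode

def word : (k : ℕ) → SpCode k → List ℕ
  | 0, e => List.replicate e 0
  | k + 1, l => skewProd (k + 3) (List.map (word k) l)

def one : (k : ℕ) → SpCode k
  | 0 => (0 : ℕ)
  | _ + 1 => ([] : List _)

def sigma1 : (k : ℕ) → SpCode k
  | 0 => (1 : ℕ)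
  | k + 1 => [sigma1 k]

def theta : (k : ℕ) → ℕ → SpCode k
  | 0, t => t
  | k + 1, t => sigma1 k :: List.replicate (t - 1) (one k)

def Valid : (k : ℕ) → SpCode k → Prop
  | 0, _ => True
  | k + 1, l => (∀ x ∈ l, Valid k x) ∧ List.head? l ≠ some (one k)

def Lt : (k : ℕ) → SpCode k → SpCode k → Prop
  | 0 => fun a b => a < b
  | k + 1 => List.Shortlex (Lt k)

theorem wellFounded_lt : ∀ k, WellFounded (Lt k)
  | 0 => (measure id).wf
  | k + 1 => List.Shortlex.wf (wellFounded_lt k)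

variable {k t : ℕ}

theorem word_succ (l : SpCode (k + 1)) :
    word (k + 1) l = skewProd (k + 3) (l.map (word k)) := rfl

@[simp] theorem word_one : word k (one k) = [] := by cases k <;> rfl

theorem word_sigma1 : ∀ k, word k (sigma1 k) = [0]
  | 0 => rfl
  | k + 1 => by rw [word_succ, sigma1, List.map_singleton, skewProd_singleton, word_sigma1 k]

theorem word_theta : word k (theta k t) = BraidInf.theta (k + 2) t := by
  cases k <;> simp [word, theta, BraidInf.theta, word_sigma1]

theorem sigma1_ne_one : sigma1 k ≠ one k := fun h => by
  simpa [word_sigma1] using congrArg (word k) h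

theorem theta_ne_one (ht : 1 ≤ t) : theta k t ≠ one k := by
  cases k
  · exact Nat.one_le_iff_ne_zero.mp ht
  · simp [theta, one]

theorem valid_one : Valid k (one k) := by
  cases k <;> simp [Valid, one]

theorem valid_sigma1 : ∀ k, Valid k (sigma1 k)
  | 0 => trivial
  | k + 1 => by simpa [Valid, sigma1] using ⟨valid_sigma1 k, sigma1_ne_one⟩

theorem valid_theta : Valid k (theta k t) := by
  cases k
  · trivial
  · refine ⟨?_, by simpa [theta] using sigma1_ne_one⟩
    simp only [theta, List.mem_cons, List.mem_replicate]
    rintro x (rfl | ⟨-, rfl⟩)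
    exacts [valid_sigma1 _, valid_one]

theorem word_eq_nil_iff : ∀ {k} {c : SpCode k}, Valid k c → (word k c = [] ↔ c = one k)
  | 0, e, _ => by simp [word, one]
  | _ + 1, [], _ => by simp [word_succ, one]
  | _ + 1, [x], hv => by
    simpa [word_succ, word_eq_nil_iff (hv.1 x (by simp)), one] using hv.2
  | _ + 1, _ :: _ :: _, _ => by simpa [word_succ, one] using skewProd_ne_nil (by simp)

theorem isSpecial_word : ∀ {k} {c : SpCode k}, Valid k c → IsSpecial (k + 2) (word k c)
  | 0, e, _ => IsSpecial.of2 e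
  | k + 1, [], _ => IsSpecial.triv (k + 3) (by omega)
  | k + 1, x :: l, hv => by
    refine IsSpecial.skew (k + 3) (by omega) _ (by simp) ?_ ?_
    · simp only [List.mem_map]
      rintro w ⟨y, hy, rfl⟩
      exact isSpecial_word (hv.1 y hy)
    · simpa [word_eq_nil_iff (hv.1 x (by simp))] using hv.2

theorem Valid.exists_ne_one {l : SpCode (k + 1)} (hv : Valid (k + 1) l) (hl : l ≠ one (k + 1)) :
    ∃ x ∈ l, x ≠ one k := by
  obtain ⟨x, l, rfl⟩ := List.exists_cons_of_ne_nil hl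
  exact ⟨x, List.mem_cons_self, by simpa using hv.2⟩

theorem Valid.append_cons {bs rest rest' : List (SpCode k)} {b b' : SpCode k}
    (hv : Valid (k + 1) (bs ++ b :: rest)) (hb' : Valid k b') (hrest' : ∀ x ∈ rest', Valid k x)
    (hhead : bs ≠ [] ∨ b' ≠ one k) : Valid (k + 1) (bs ++ b' :: rest') := by
  refine ⟨fun x hx => ?_, ?_⟩
  · simp only [List.mem_append, List.mem_cons] at hx
    rcases hx with hx | rfl | hx
    exacts [hv.1 x (by simp [hx]), hb', hrest' x hx]
  · cases bs
    · simpa using hhead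
    · simpa using hv.2

theorem Valid.isSpecial_of_mem {bs rest : List (SpCode k)} (hv : Valid (k + 1) (bs ++ rest)) :
    ∀ w ∈ bs.map (word k), IsSpecial (k + 2) w := by
  simp only [List.mem_map]
  rintro w ⟨x, hx, rfl⟩
  exact isSpecial_word (hv.1 x (by simp [hx]))

theorem Valid.head!_ne_nil {bs rest : List (SpCode k)} {b : SpCode k}
    (hv : Valid (k + 1) (bs ++ b :: rest)) (hb : b ≠ one k) :
    (bs.map (word k) ++ [word k b]).head! ≠ [] := by
  cases bs with
  | nil => simpa [word_eq_nil_iff (hv.1 b (by simp))] using hb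
  | cons x bs => simpa [word_eq_nil_iff (hv.1 x (by simp))] using hv.2

theorem lt_append_cons {bs rest rest' : List (SpCode k)} {b b' : SpCode k} (h : Lt k b' b)
    (hlen : rest'.length = rest.length) : Lt (k + 1) (bs ++ b' :: rest') (bs ++ b :: rest) :=
  (List.Shortlex.of_lex (by simp [hlen]) (List.Lex.rel h)).append_left bs

/-- The last clause says that a step reaches `1` only from `σ₁`; it keeps the leading component of
the new skew product nontrivial. -/
def SpDescent (k t : ℕ) (c c' : SpCode k) : Prop :=
  Valid k c' ∧ Lt k c' c ∧ SpStep (k + 2) (word k c) t (word k c') ∧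
    (c' = one k → word k c = [0])

section descent

variable {bs : List (SpCode k)} {br d : SpCode k} {z : ℕ}

theorem SpDescent.singleton (hbr : Valid k br) (hd : SpDescent k t br (one k)) :
    SpDescent (k + 1) t [br] [] := by
  obtain ⟨-, -, hstep, hbr0⟩ := hd
  refine ⟨valid_one (k := k + 1), List.Shortlex.of_length_lt (by simp), ?_, fun _ => by
    simpa [word_succ] using hbr0 rfl⟩
  simpa [word_succ] using SpStep.case1 (k + 3) (by omega) [] (word k br) [] 1 t le_rfl (by simp)
    (isSpecial_word hbr) (by simp [hbr0 rfl]) (by simp [hbr0 rfl]) (by simpa using hstep)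
    (Or.inl rfl)

theorem SpDescent.append_cons (hd : SpDescent k t br d)
    (hv : Valid (k + 1) (bs ++ br :: List.replicate z (one k))) (hbr : br ≠ one k)
    (hcase : z = 0 ∨ word k br ≠ word k d ++ [0]) (hhead : bs ≠ [] ∨ d ≠ one k) :
    SpDescent (k + 1) t (bs ++ br :: List.replicate z (one k))
      (bs ++ d :: List.replicate z (one k)) := by
  obtain ⟨hdv, hlt, hstep, -⟩ := hd
  have hbrv : Valid k br := hv.1 br (by simp)
  refine ⟨hv.append_cons hdv (by simp [valid_one]) hhead, lt_append_cons hlt rfl, ?_,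
    by simp [one]⟩
  simpa [word_succ] using SpStep.case1 (k + 3) (by omega) _ _ _ (z + 1) t (by omega)
    hv.isSpecial_of_mem (isSpecial_word hbrv) ((word_eq_nil_iff hbrv).not.2 hbr)
    (hv.head!_ne_nil hbr) hstep (by simpa using hcase)

theorem SpDescent.append_cons_theta (hd : SpDescent k t br d)
    (hv : Valid (k + 1) (bs ++ br :: List.replicate (z + 1) (one k))) (hbr : br ≠ one k)
    (heq : word k br = word k d ++ [0]) (hhead : bs ≠ [] ∨ d ≠ one k) :
    SpDescent (k + 1) t (bs ++ br :: List.replicate (z + 1) (one k))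
      (bs ++ d :: theta k t :: List.replicate z (one k)) := by
  obtain ⟨hdv, hlt, hstep, -⟩ := hd
  have hbrv : Valid k br := hv.1 br (by simp)
  refine ⟨hv.append_cons hdv ?_ hhead, lt_append_cons hlt (by simp), ?_, by simp [one]⟩
  · simp only [List.mem_cons, List.mem_replicate]
    rintro x (rfl | ⟨-, rfl⟩)
    exacts [valid_theta, valid_one]
  · have hcond : word k d ≠ [] ∨ bs.map (word k) ≠ [] := by
      rw [Ne, word_eq_nil_iff hdv, Ne, List.map_eq_nil_iff]
      tauto
    simpa [word_succ, word_theta] using SpStep.case2 (k + 3) (by omega) _ _ _ (z + 2) t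
      (by omega) hv.isSpecial_of_mem (isSpecial_word hbrv) ((word_eq_nil_iff hbrv).not.2 hbr)
      (hv.head!_ne_nil hbr) hstep heq hcond

theorem SpDescent.theta_cons (ht : 1 ≤ t) (hbr : word k br = [0]) :
    SpDescent (k + 1) t (br :: List.replicate (z + 1) (one k))
      (theta k t :: List.replicate z (one k)) := by
  refine ⟨⟨?_, by simpa using theta_ne_one ht⟩, List.Shortlex.of_length_lt (by simp), ?_,
    by simp [one]⟩
  · simp only [List.mem_cons, List.mem_replicate]
    rintro x (rfl | ⟨-, rfl⟩)
    exacts [valid_theta, valid_one]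
  · simpa [word_succ, word_theta, hbr] using SpStep.case3 (k + 3) (by omega) (z + 2) t (by omega)

end descent

theorem exists_spDescent : ∀ (k : ℕ) {t : ℕ} {c : SpCode k}, 1 ≤ t → Valid k c → c ≠ one k →
    ∃ c', SpDescent k t c c'
  | 0, t, e, _, _, he => by
    obtain ⟨e, rfl⟩ := Nat.exists_eq_succ_of_ne_zero he
    exact ⟨e, trivial, Nat.lt_succ_self e, SpStep.base e t, by rintro rfl; rfl⟩
  | k + 1, t, l, ht, hv, hl => by
    obtain ⟨bs, br, z, rfl, hbr⟩ := List.exists_eq_append_cons_replicate (hv.exists_ne_one hl)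
    have hbrv : Valid k br := hv.1 br (by simp)
    obtain ⟨d, hd⟩ := exists_spDescent k ht hbrv hbr
    by_cases hcol : bs = [] ∧ d = one k
    · obtain ⟨rfl, rfl⟩ := hcol
      have hbr0 : word k br = [0] := hd.2.2.2 rfl
      rcases z with _ | z
      · exact ⟨[], hd.singleton hbrv⟩
      · exact ⟨_, SpDescent.theta_cons ht hbr0⟩
    · have hhead : bs ≠ [] ∨ d ≠ one k := by tauto
      by_cases hcase : z = 0 ∨ word k br ≠ word k d ++ [0]
      · exact ⟨_, hd.append_cons hv hbr hcase hhead⟩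
      · push Not at hcase
        obtain ⟨z, rfl⟩ := Nat.exists_eq_succ_of_ne_zero hcase.1
        exact ⟨_, hd.append_cons_theta hv hbr hcase.2 hhead⟩

theorem Valid.spReaches {c : SpCode k} (hc : Valid k c) (t : ℕ) :
    SpReaches (k + 2) t (word k c) := by
  induction c using (wellFounded_lt k).induction generalizing t with
  | _ c ih =>
    by_cases h : c = one k
    · rw [h, word_one]
      exact .nil t
    · obtain ⟨c', hv', hlt, hstep, -⟩ := exists_spDescent k (Nat.le_add_left 1 t) hc h
      exact .cons hstep (ih c' hlt hv' (t + 1))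

end SpCode

open SpCode

theorem IsSpecial.exists_code {n : ℕ} {w : List ℕ} (h : IsSpecial n w) :
    ∀ k, n = k + 2 → ∃ c : SpCode k, Valid k c ∧ word k c = w := by
  induction h with
  | of2 e =>
    rintro k hk
    obtain rfl : k = 0 := by omega
    exact ⟨e, trivial, rfl⟩
  | triv n _ => exact fun k _ => ⟨one k, valid_one, word_one⟩
  | skew n h3 ws hne _ hhd ih =>
    rintro (_ | k) hk
    · omega
    have hws : ws ∈ Set.range (List.map fun c : {c : SpCode k // Valid k c} => word k c) := by
      rw [Set.range_list_map]
      intro w hw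
      obtain ⟨c, hc, rfl⟩ := ih w hw k (by omega)
      exact ⟨⟨c, hc⟩, rfl⟩
    obtain ⟨l, rfl⟩ := hws
    obtain ⟨x, l, rfl⟩ := List.exists_cons_of_ne_nil (mt List.map_eq_nil_iff.2 hne)
    refine ⟨(x :: l).map Subtype.val, ⟨fun y hy => ?_, ?_⟩, by simp [word_succ, hk]⟩
    · obtain ⟨y, -, rfl⟩ := List.mem_map.1 hy
      exact y.2
    · simpa [← word_eq_nil_iff x.2] using hhd

theorem spseq_reaches_one_general (n : ℕ) (w : List ℕ) (hw : IsSpecial n w) :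
    ∃ (t : ℕ) (c : ℕ → List ℕ), c 0 = w ∧
      (∀ s, s < t → SpStep n (c s) (s + 1) (c (s + 1))) ∧ mkw (c t) = 1 := by
  obtain ⟨k, rfl⟩ : ∃ k, n = k + 2 := ⟨n - 2, by have := hw.two_le; omega⟩
  obtain ⟨c, hc, rfl⟩ := hw.exists_code k rfl
  obtain ⟨N, seq, h0, hstep, hN⟩ := (hc.spReaches 0).exists_seq
  refine ⟨N, seq, h0, fun s hs => by simpa using hstep s hs, ?_⟩
  rw [hN]
  exact map_one braidCon.mk'

/-- Proposition 4.10: for every special braid b, the G∞^sp-sequence from b is finite,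
i.e. there is a t with b{1}^sp{2}^sp⋯{t}^sp = 1. -/
theorem spseq_reaches_one (n : ℕ) (hn : 2 ≤ n) (w : List ℕ) (hw : IsSpecial n w) :
    ∃ (t : ℕ) (c : ℕ → List ℕ), c 0 = w ∧
      (∀ s, s < t → SpStep n (c s) (s + 1) (c (s + 1))) ∧ mkw (c t) = 1 :=
  spseq_reaches_one_general n w hw

end BraidInf
end
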